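/- arXiv:2409.00321 — 5 statements merged into one kernel-verified Lean document; each statement's English description precedes it below -/
import Mathlib

section
/- Let α, β, γ, δ, ε ∈ ℂ and set a₁₁ = 2|α|² + 2|β|² + |γ|², a₂₂ = 2|δ|² + 2|ε|² + |γ|², and s = a₁₁ + a₂₂ − 2(|α+δ|² + |β+ε|²). Then for every λ > 0, λ² a₁₁ + λ s + a₂₂ ≥ 0. -/
/-! The quadratic is a sum of squares: it equals
`2 |λα - δ|² + 2 |λβ - ε|² + (λ + 1)² |γ|²`, so it is nonnegative for every real `λ`. -/

section InnerProductSpace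

variable {E : Type*} [NormedAddCommGroup E] [InnerProductSpace ℝ E]

theorem norm_smul_sub_sq_eq (r : ℝ) (x y : E) :
    ‖r • x - y‖ ^ 2 = r ^ 2 * ‖x‖ ^ 2 + ‖y‖ ^ 2 - r * (‖x + y‖ ^ 2 - ‖x‖ ^ 2 - ‖y‖ ^ 2) := by
  rw [norm_sub_sq_real, norm_add_sq_real, norm_smul, inner_smul_left, Real.norm_eq_abs,
    mul_pow, sq_abs]
  simp only [conj_trivial]
  ring

end InnerProductSpace

theorem stmt_4 (α β γ δ ε : ℂ)
    (a11 a22 s : ℝ)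
    (ha11 : a11 = 2 * Complex.normSq α + 2 * Complex.normSq β + Complex.normSq γ)
    (ha22 : a22 = 2 * Complex.normSq δ + 2 * Complex.normSq ε + Complex.normSq γ)
    (hs : s = a11 + a22 - 2 * (Complex.normSq (α + δ) + Complex.normSq (β + ε))) :
    ∀ lam : ℝ, 0 < lam → 0 ≤ lam ^ 2 * a11 + lam * s + a22 := by
  intro lam _
  have sum_of_squares : lam ^ 2 * a11 + lam * s + a22 =
      2 * ‖lam • α - δ‖ ^ 2 + 2 * ‖lam • β - ε‖ ^ 2 + (lam + 1) ^ 2 * ‖γ‖ ^ 2 := by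
    simp only [hs, ha11, ha22, norm_smul_sub_sq_eq, Complex.normSq_eq_norm_sq]
    ring
  rw [sum_of_squares]
  positivity
end

section
/- Let n ≥ 2, k = 4, and let A be the n×n diagonal matrix diag(1,…,1,4), B = 2·Id_n, A' = 2, B' = 4, and C = (0,…,0,2√3)ᵗ ∈ ℂⁿ. Then {A,B} − CC* = 4·Id_n and {A',B'} − C*C = 4, i.e., these matrices satisfy the algebraic vortex vbMA equations with k = 4. -/
/-!
With `B = 2` the anticommutator is `{A, B} = 4 A`, and `A = 1 + 3 E` where `E` is the matrix unit
at the last diagonal entry. Since `C` is supported on the last coordinate with entry `c = 2√3`,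
`C C* = |c|² E = 12 E` and `C* C = |c|² = 12`; hence `{A, B} - C C* = 4` and `2·4 + 4·2 - C* C = 4`.
-/

open Matrix

namespace Matrix

variable {ι R : Type*} [DecidableEq ι]

theorem mul_smul_one_add_smul_one_mul [Fintype ι] [CommSemiring R] (A : Matrix ι ι R) (b : R) :
    A * (b • 1) + (b • 1) * A = (2 * b) • A := by
  rw [Matrix.mul_smul, Matrix.smul_mul, Matrix.mul_one, Matrix.one_mul, ← add_smul, two_mul]

theorem vecMulVec_single_single [MulZeroClass R] (i j : ι) (a b : R) :
    vecMulVec (Pi.single i a) (Pi.single j b) = single i j (a * b) := by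
  ext k l
  simp only [vecMulVec_apply, single_apply, Pi.single_apply]
  split_ifs <;> simp_all

theorem diagonal_ite_eq_one_add_single [Ring R] (i : ι) (a : R) :
    diagonal (fun k => if k = i then a else 1) = 1 + single i i (a - 1) := by
  rw [← diagonal_one, ← diagonal_single, diagonal_add]
  congr 1
  ext k
  by_cases hk : k = i <;> simp [hk]

end Matrix

theorem stmt_11 (n : ℕ) (hn : 2 ≤ n)
    (A B : Matrix (Fin n) (Fin n) ℂ) (C : Fin n → ℂ)
    (hA : A = Matrix.diagonal (fun i : Fin n => if (i : ℕ) = n - 1 then (4 : ℂ) else 1))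
    (hB : B = (2 : ℂ) • (1 : Matrix (Fin n) (Fin n) ℂ))
    (hC : C = fun i : Fin n => if (i : ℕ) = n - 1 then ((2 * Real.sqrt 3 : ℝ) : ℂ) else 0) :
    A * B + B * A - Matrix.of (fun i j => C i * star (C j)) =
        (4 : ℂ) • (1 : Matrix (Fin n) (Fin n) ℂ) ∧
    ((2 : ℂ) * 4 + 4 * 2) - ∑ i, star (C i) * C i = 4 := by
  set last : Fin n := ⟨n - 1, by omega⟩
  have hlast (i : Fin n) : (i : ℕ) = n - 1 ↔ i = last := (Fin.ext_iff (a := i) (b := last)).symm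
  simp only [hlast] at hA hC
  set c : ℂ := ((2 * √3 : ℝ) : ℂ)
  have hc : star c * c = 12 := by
    rw [Complex.star_def, Complex.conj_ofReal, ← Complex.ofReal_mul, mul_mul_mul_comm,
      Real.mul_self_sqrt zero_le_three]
    norm_num
  replace hC : C = Pi.single last c := by
    rw [hC]
    ext i
    exact (Pi.single_apply _ _ _).symm
  have hCCstar : Matrix.of (fun i j => C i * star (C j)) = single last last 12 := by
    change vecMulVec C (star C) = _
    rw [hC, Pi.star_single, vecMulVec_single_single, mul_comm, hc]
  have hCstarC : ∑ i, star (C i) * C i = 12 := by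
    change star C ⬝ᵥ C = 12
    rw [hC, dotProduct_single, Pi.star_apply, Pi.single_eq_same, hc]
  subst hA hB
  refine ⟨?_, by rw [hCstarC]; norm_num⟩
  rw [mul_smul_one_add_smul_one_mul, hCCstar, diagonal_ite_eq_one_add_single, smul_add,
    smul_single]
  norm_num
end

section
/- Let n ≥ 2. For all complex matrices α ∈ M_n(ℂ), vectors γ ∈ ℂⁿ, and δ ∈ ℂ, the quadratic form 4 Σ_{i,j} |α_{ij}|² + 3|γ|² + 3|γ_n|² + 8|δ|² − 4√3 Re(conj(δ) γ_n) − 4√3 Re(Σ_j conj(α_{nj}) γ_j) is nonnegative, and it equals zero for some nonzero (α, γ, δ). -/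
/-!
Completing the square in each coordinate paired by the cross terms, the form equals
`4 ∑_{i ≠ n, j} |α_{ij}|² + ∑_j |2α_{nj} - √3 γ_j|² + |2δ - √3 γ_n|² + 4|δ|²`,
which is visibly nonnegative. It vanishes exactly when `δ = 0`, `γ_n = 0`, all rows of `α`
but the last vanish, and the last row is `(√3 / 2) γ`; since `n ≥ 2`, `γ` can be a nonzero
vector supported off the last coordinate.
-/

open Complex Finset

lemma Complex.normSq_two_mul_sub_sqrt_three_mul (a g : ℂ) :
    normSq (2 * a - (√3 : ℝ) * g) =
      4 * normSq a + 3 * normSq g - 4 * √3 * (starRingEnd ℂ a * g).re := by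
  have h3 : √3 * √3 = 3 := Real.mul_self_sqrt (by norm_num)
  rw [normSq_sub, normSq_mul, normSq_mul, normSq_ofReal, h3, map_mul, conj_ofReal]
  simp only [mul_re, mul_im, conj_re, conj_im, ofReal_re, ofReal_im, re_ofNat, im_ofNat,
    normSq_ofNat]
  ring

lemma Complex.sum_normSq_two_mul_sub_sqrt_three_mul {ι : Type*} [Fintype ι] (a g : ι → ℂ) :
    ∑ j, normSq (2 * a j - (√3 : ℝ) * g j) =
      4 * ∑ j, normSq (a j) + 3 * ∑ j, normSq (g j)
        - 4 * √3 * (∑ j, starRingEnd ℂ (a j) * g j).re := by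
  simp only [normSq_two_mul_sub_sqrt_three_mul, re_sum, mul_sum, sum_add_distrib, sum_sub_distrib]

lemma quadraticForm_eq_sum_normSq {ι : Type*} [Fintype ι] [DecidableEq ι] (lst : ι)
    (α : Matrix ι ι ℂ) (γ : ι → ℂ) (δ : ℂ) :
    4 * ∑ i, ∑ j, normSq (α i j) + 3 * ∑ j, normSq (γ j) + 3 * normSq (γ lst)
        + 8 * normSq δ - 4 * √3 * (starRingEnd ℂ δ * γ lst).re
        - 4 * √3 * (∑ j, starRingEnd ℂ (α lst j) * γ j).re =
      4 * ∑ i ∈ univ.erase lst, ∑ j, normSq (α i j)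
        + ∑ j, normSq (2 * α lst j - (√3 : ℝ) * γ j)
        + normSq (2 * δ - (√3 : ℝ) * γ lst) + 4 * normSq δ := by
  rw [← add_sum_erase univ _ (mem_univ lst), sum_normSq_two_mul_sub_sqrt_three_mul,
    normSq_two_mul_sub_sqrt_three_mul]
  ring

theorem stmt_12_general (n : ℕ) (hn : 2 ≤ n) (lst : Fin n)
    (Q : Matrix (Fin n) (Fin n) ℂ → (Fin n → ℂ) → ℂ → ℝ)
    (hQ : ∀ α γ δ, Q α γ δ =
      4 * ∑ i, ∑ j, Complex.normSq (α i j) + 3 * ∑ j, Complex.normSq (γ j) +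
        3 * Complex.normSq (γ lst) + 8 * Complex.normSq δ -
        4 * Real.sqrt 3 * ((starRingEnd ℂ) δ * γ lst).re -
        4 * Real.sqrt 3 * (∑ j, (starRingEnd ℂ) (α lst j) * γ j).re) :
    (∀ α γ δ, 0 ≤ Q α γ δ) ∧
    (∃ α γ δ, (α, γ, δ) ≠ 0 ∧ Q α γ δ = 0) := by
  refine ⟨fun α γ δ => ?_, ?_⟩
  · rw [hQ, quadraticForm_eq_sum_normSq]
    simp only [normSq_eq_norm_sq]
    positivity
  obtain ⟨k, hk⟩ := Fintype.exists_ne_of_one_lt_card (by rw [Fintype.card_fin]; omega) lst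
  set γ : Fin n → ℂ := Pi.single k 1
  set α := (0 : Matrix (Fin n) (Fin n) ℂ).updateRow lst ((√3 / 2 : ℂ) • γ)
  refine ⟨α, γ, 0, fun h => by simpa [γ] using congrFun (congrArg (·.2.1) h) k, ?_⟩
  have hγ : γ lst = 0 := Pi.single_eq_of_ne hk.symm 1
  have hrows : ∀ i ∈ univ.erase lst, ∑ j, normSq (α i j) = 0 := fun i hi => by
    simp [α, Matrix.updateRow_ne (ne_of_mem_erase hi)]
  have h_two_mul : (2 : ℂ) * (√3 / 2) = √3 := by ring
  rw [hQ, quadraticForm_eq_sum_normSq, sum_eq_zero hrows]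
  simp [α, hγ, ← mul_assoc, h_two_mul]

theorem stmt_12 (n : ℕ) (hn : 2 ≤ n) (lst : Fin n) (hlst : (lst : ℕ) = n - 1)
    (Q : Matrix (Fin n) (Fin n) ℂ → (Fin n → ℂ) → ℂ → ℝ)
    (hQ : ∀ α γ δ, Q α γ δ =
      4 * ∑ i, ∑ j, Complex.normSq (α i j) + 3 * ∑ j, Complex.normSq (γ j) +
        3 * Complex.normSq (γ lst) + 8 * Complex.normSq δ -
        4 * Real.sqrt 3 * ((starRingEnd ℂ) δ * γ lst).re -
        4 * Real.sqrt 3 * (∑ j, (starRingEnd ℂ) (α lst j) * γ j).re) :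
    (∀ α γ δ, 0 ≤ Q α γ δ) ∧
    (∃ α γ δ, (α, γ, δ) ≠ 0 ∧ Q α γ δ = 0) :=
  stmt_12_general n hn lst Q hQ
end

section
/- Let n ≥ 2. For all α ∈ M_n(ℂ), β ∈ ℂⁿ, δ ∈ ℂ, the quadratic form 2 Σ_{i<n,j<n} |α_{ij}|² + 5 Σ_{i<n}(|α_{in}|² + |α_{ni}|²) + 8|α_{nn}|² + 6|β|² + 4|δ|² − 4√3 Re(conj(δ) β_n) − 4√3 Re(Σ_j conj(α_{jn}) β_j) is strictly positive whenever (α, β, δ) ≠ 0. -/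
open Finset
open Complex (normSq normSq_nonneg)

/-!
Bounding each cross term by `2 a Re (x̄ y) ≤ a² |x|² + |y|²` (with `a = 2` for the pair
`α_nn, β_n` and `a = 1` otherwise) leaves a diagonal form whose coefficients all exceed
`2 - √3`, so the form is at least `(2 - √3) (∑ |α_ij|² + ∑ |β_j|² + |δ|²)`.
-/

lemma two_mul_mul_re_conj_mul_le (a : ℝ) (x y : ℂ) :
    2 * a * ((starRingEnd ℂ) x * y).re ≤ a ^ 2 * normSq x + normSq y := by
  simp only [Complex.mul_re, Complex.conj_re, Complex.conj_im, Complex.normSq_apply]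
  nlinarith [sq_nonneg (a * x.re - y.re), sq_nonneg (a * x.im - y.im)]

lemma two_mul_re_sum_conj_mul_le {ι : Type*} (s : Finset ι) (x y : ι → ℂ) :
    2 * (∑ j ∈ s, (starRingEnd ℂ) (x j) * y j).re ≤
      ∑ j ∈ s, normSq (x j) + ∑ j ∈ s, normSq (y j) := by
  rw [Complex.re_sum, mul_sum, ← sum_add_distrib]
  refine sum_le_sum fun j _ => ?_
  simpa using two_mul_mul_re_conj_mul_le 1 (x j) (y j)

lemma sum_normSq_eq_zero_iff {ι : Type*} [Fintype ι] (v : ι → ℂ) :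
    ∑ i, normSq (v i) = 0 ↔ v = 0 := by
  rw [Fintype.sum_eq_zero_iff_of_nonneg fun i => normSq_nonneg _]
  simp [funext_iff]

lemma sum_sum_normSq_eq_zero_iff {ι κ : Type*} [Fintype ι] [Fintype κ] (α : Matrix ι κ ℂ) :
    ∑ i, ∑ j, normSq (α i j) = 0 ↔ α = 0 := by
  rw [Fintype.sum_eq_zero_iff_of_nonneg (f := fun i => ∑ j, normSq (α i j))
    fun i => sum_nonneg fun j _ => normSq_nonneg _]
  simp only [funext_iff, sum_normSq_eq_zero_iff, Pi.zero_apply, ← Matrix.ext_iff,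
    Matrix.zero_apply]

lemma sum_normSq_add_sum_normSq_add_normSq_pos {ι κ : Type*} [Fintype ι] [Fintype κ]
    {α : Matrix ι κ ℂ} {β : ι → ℂ} {δ : ℂ} (h : (α, β, δ) ≠ 0) :
    0 < ∑ i, ∑ j, normSq (α i j) + ∑ j, normSq (β j) + normSq δ := by
  have hα : 0 ≤ ∑ i, ∑ j, normSq (α i j) :=
    sum_nonneg fun i _ => sum_nonneg fun j _ => normSq_nonneg _
  have hβ : 0 ≤ ∑ j, normSq (β j) := sum_nonneg fun j _ => normSq_nonneg _
  have hδ := normSq_nonneg δ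
  by_contra! hle
  refine h (Prod.ext ((sum_sum_normSq_eq_zero_iff α).1 ?_)
    (Prod.ext ((sum_normSq_eq_zero_iff β).1 ?_) (Complex.normSq_eq_zero.1 ?_))) <;> linarith

lemma Fin.sum_univ_eq_add_sum_filter_lt {M : Type*} [AddCommMonoid M] {n : ℕ} (l : Fin n)
    (hl : (l : ℕ) = n - 1) (f : Fin n → M) :
    ∑ i, f i = f l + ∑ i ∈ univ.filter (fun i : Fin n => (i : ℕ) < n - 1), f i := by
  have : univ.filter (fun i : Fin n => (i : ℕ) < n - 1) = univ.erase l := by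
    ext i
    simp only [mem_filter, mem_univ, true_and, mem_erase, ne_eq, and_true, Fin.ext_iff, hl]
    have := i.isLt
    omega
  rw [this, add_sum_erase _ _ (mem_univ l)]

lemma sqrt_three_form_lower_bound {ι : Type*} (s : Finset ι) (l : ι) (α : ι → ι → ℂ)
    (β : ι → ℂ) (δ : ℂ) :
    (2 - Real.sqrt 3) * (normSq (α l l) + ∑ i ∈ s, normSq (α l i) +
        ∑ i ∈ s, normSq (α i l) + ∑ i ∈ s, ∑ j ∈ s, normSq (α i j) +
        (normSq (β l) + ∑ i ∈ s, normSq (β i)) + normSq δ) ≤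
      2 * ∑ i ∈ s, ∑ j ∈ s, normSq (α i j) +
        5 * (∑ i ∈ s, normSq (α i l) + ∑ i ∈ s, normSq (α l i)) +
        8 * normSq (α l l) + 6 * (normSq (β l) + ∑ i ∈ s, normSq (β i)) +
        4 * normSq δ - 4 * Real.sqrt 3 * ((starRingEnd ℂ) δ * β l).re -
        4 * Real.sqrt 3 * (((starRingEnd ℂ) (α l l) * β l).re +
          (∑ j ∈ s, (starRingEnd ℂ) (α j l) * β j).re) := by
  have hδβ := two_mul_mul_re_conj_mul_le 1 δ (β l)
  have hαβ := two_mul_mul_re_conj_mul_le 2 (α l l) (β l)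
  have hsum := two_mul_re_sum_conj_mul_le s (fun j => α j l) β
  have hsqrt : Real.sqrt 3 ≤ 2 := by
    rw [Real.sqrt_le_left two_pos.le]; norm_num
  have hsqrt₀ := Real.sqrt_nonneg 3
  have hslack : 0 ≤ 2 - Real.sqrt 3 := by linarith
  have hA : 0 ≤ ∑ i ∈ s, ∑ j ∈ s, normSq (α i j) :=
    sum_nonneg fun i _ => sum_nonneg fun j _ => normSq_nonneg _
  have hcol : 0 ≤ ∑ i ∈ s, normSq (α i l) := sum_nonneg fun i _ => normSq_nonneg _
  have hrow : 0 ≤ ∑ i ∈ s, normSq (α l i) := sum_nonneg fun i _ => normSq_nonneg _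
  have hβs : 0 ≤ ∑ i ∈ s, normSq (β i) := sum_nonneg fun i _ => normSq_nonneg _
  linarith [mul_le_mul_of_nonneg_left hδβ hsqrt₀, mul_le_mul_of_nonneg_left hαβ hsqrt₀,
    mul_le_mul_of_nonneg_left hsum hsqrt₀, mul_nonneg hsqrt₀ hA, mul_nonneg hsqrt₀ hrow,
    mul_nonneg hslack hcol, mul_nonneg hslack hβs, mul_nonneg hslack (normSq_nonneg δ),
    mul_nonneg hslack (normSq_nonneg (β l)),
    mul_nonneg hslack (normSq_nonneg (α l l))]

theorem stmt_13_general (n : ℕ) (lst : Fin n) (hlst : (lst : ℕ) = n - 1)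
    (Q : Matrix (Fin n) (Fin n) ℂ → (Fin n → ℂ) → ℂ → ℝ)
    (hQ : ∀ α β δ, Q α β δ =
      2 * ∑ i ∈ univ.filter (fun i : Fin n => (i : ℕ) < n - 1),
            ∑ j ∈ univ.filter (fun j : Fin n => (j : ℕ) < n - 1), Complex.normSq (α i j) +
        5 * ∑ i ∈ univ.filter (fun i : Fin n => (i : ℕ) < n - 1),
              (Complex.normSq (α i lst) + Complex.normSq (α lst i)) +
        8 * Complex.normSq (α lst lst) +
        6 * ∑ j, Complex.normSq (β j) + 4 * Complex.normSq δ -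
        4 * Real.sqrt 3 * ((starRingEnd ℂ) δ * β lst).re -
        4 * Real.sqrt 3 * (∑ j, (starRingEnd ℂ) (α j lst) * β j).re) :
    ∀ α β δ, (α, β, δ) ≠ 0 → 0 < Q α β δ := by
  intro α β δ hne
  set s := univ.filter (fun i : Fin n => (i : ℕ) < n - 1)
  have split {M : Type} [AddCommMonoid M] (f : Fin n → M) :
      ∑ i, f i = f lst + ∑ i ∈ s, f i :=
    Fin.sum_univ_eq_add_sum_filter_lt lst hlst f
  have hα : ∑ i, ∑ j, normSq (α i j) = normSq (α lst lst) + ∑ i ∈ s, normSq (α lst i) +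
      ∑ i ∈ s, normSq (α i lst) + ∑ i ∈ s, ∑ j ∈ s, normSq (α i j) := by
    simp only [split, sum_add_distrib]
    ring
  have hsqrt : Real.sqrt 3 < 2 := by
    rw [Real.sqrt_lt' two_pos]; norm_num
  calc 0 < (2 - Real.sqrt 3) *
        (∑ i, ∑ j, normSq (α i j) + ∑ j, normSq (β j) + normSq δ) :=
        mul_pos (by linarith) (sum_normSq_add_sum_normSq_add_normSq_pos hne)
    _ ≤ Q α β δ := by
      rw [hQ, hα, split (fun j => normSq (β j)), split, Complex.add_re, sum_add_distrib]
      exact sqrt_three_form_lower_bound s lst α β δ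

theorem stmt_13 (n : ℕ) (hn : 2 ≤ n) (lst : Fin n) (hlst : (lst : ℕ) = n - 1)
    (Q : Matrix (Fin n) (Fin n) ℂ → (Fin n → ℂ) → ℂ → ℝ)
    (hQ : ∀ α β δ, Q α β δ =
      2 * ∑ i ∈ univ.filter (fun i : Fin n => (i : ℕ) < n - 1),
            ∑ j ∈ univ.filter (fun j : Fin n => (j : ℕ) < n - 1), Complex.normSq (α i j) +
        5 * ∑ i ∈ univ.filter (fun i : Fin n => (i : ℕ) < n - 1),
              (Complex.normSq (α i lst) + Complex.normSq (α lst i)) +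
        8 * Complex.normSq (α lst lst) +
        6 * ∑ j, Complex.normSq (β j) + 4 * Complex.normSq δ -
        4 * Real.sqrt 3 * ((starRingEnd ℂ) δ * β lst).re -
        4 * Real.sqrt 3 * (∑ j, (starRingEnd ℂ) (α j lst) * β j).re) :
    ∀ α β δ, (α, β, δ) ≠ 0 → 0 < Q α β δ :=
  stmt_13_general n lst hlst Q hQ
end

section
/- Let a, b, λ > 0 satisfy b² ≥ a²λ³. Define f(x) = 4b²λ² + 4abλ³ + 4a²λ⁴ − x(2abλ²(1+λ) + a²λ⁴ + b²λ). Then f(2aλ²/b) = (2λ²/b)(2b + aλ)(b² − a²λ³) ≥ 0, and hence f(x) > 0 for all 0 ≤ x < 2aλ²/b. -/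
/-! The function `f` is affine in `x` with negative slope, so it suffices to evaluate it at
the right endpoint `x₀ = 2aλ²/b`; there it factors as `(2λ²/b)(2b + aλ)(b² − a²λ³)`, which is
nonnegative exactly under the hypothesis `b² ≥ a²λ³`. -/

lemma vbMA_eval_factor (a b l : ℝ) (hb : b ≠ 0) :
    4 * b ^ 2 * l ^ 2 + 4 * a * b * l ^ 3 + 4 * a ^ 2 * l ^ 4 -
      2 * a * l ^ 2 / b * (2 * a * b * l ^ 2 * (1 + l) + a ^ 2 * l ^ 4 + b ^ 2 * l) =
    (2 * l ^ 2 / b) * (2 * b + a * l) * (b ^ 2 - a ^ 2 * l ^ 3) := by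
  field_simp
  ring

theorem stmt_17 (a b l : ℝ) (ha : 0 < a) (hb : 0 < b) (hl : 0 < l)
    (h : b ^ 2 ≥ a ^ 2 * l ^ 3)
    (f : ℝ → ℝ)
    (hf : ∀ x, f x = 4 * b ^ 2 * l ^ 2 + 4 * a * b * l ^ 3 + 4 * a ^ 2 * l ^ 4 -
      x * (2 * a * b * l ^ 2 * (1 + l) + a ^ 2 * l ^ 4 + b ^ 2 * l)) :
    f (2 * a * l ^ 2 / b) = (2 * l ^ 2 / b) * (2 * b + a * l) * (b ^ 2 - a ^ 2 * l ^ 3) ∧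
    (0 ≤ f (2 * a * l ^ 2 / b)) ∧
    (∀ x, 0 ≤ x → x < 2 * a * l ^ 2 / b → 0 < f x) := by
  have hvalue : f (2 * a * l ^ 2 / b) =
      (2 * l ^ 2 / b) * (2 * b + a * l) * (b ^ 2 - a ^ 2 * l ^ 3) := by
    rw [hf, vbMA_eval_factor a b l hb.ne']
  have hnonneg : 0 ≤ f (2 * a * l ^ 2 / b) := by
    have : 0 ≤ b ^ 2 - a ^ 2 * l ^ 3 := sub_nonneg.2 h
    rw [hvalue]
    positivity
  refine ⟨hvalue, hnonneg, fun x _ hx => ?_⟩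
  have hslope : 0 < 2 * a * b * l ^ 2 * (1 + l) + a ^ 2 * l ^ 4 + b ^ 2 * l := by positivity
  calc 0 ≤ f (2 * a * l ^ 2 / b) := hnonneg
    _ < f x := by
      rw [hf, hf]
      exact sub_lt_sub_left (mul_lt_mul_of_pos_right hx hslope) _
end
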